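/- arXiv:2112.11619 — 4 statements merged into one kernel-verified Lean document; each statement's English description precedes it below -/
import Mathlib

section
/- Let E be a real inner product space and let R : E → ℝ be differentiable with H-Lipschitz gradient, H ≥ 0, and let ρ > 0. Let c, z₀, z̄, z' ∈ E and u, u' ∈ E satisfy ∇R(z₀) + u = 0, ∇R(z') + u' = 0, and u' = u + ρ(z' − c). Define L(w, v) = R(w) + ⟪v, w − c⟫ + (ρ/2)‖w − c‖². Then L(z̄, u) − L(z', u') ≥ (ρ/2 − H/2 − 2H²/ρ)‖z' − z̄‖² − (2H²/ρ)‖z̄ − z₀‖². -/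
open scoped RealInnerProductSpace

/-- Descent lemma: a function with `H`-Lipschitz gradient admits a quadratic lower bound. -/
lemma descent_lemma_aux
    {E : Type*} [NormedAddCommGroup E] [InnerProductSpace ℝ E] [CompleteSpace E]
    (R : E → ℝ) (hR : Differentiable ℝ R)
    (H : ℝ) (hH : 0 ≤ H)
    (hLip : LipschitzWith (Real.toNNReal H) (gradient R))
    (x y : E) :
    R x + ⟪gradient R x, y - x⟫ - H / 2 * ‖y - x‖ ^ 2 ≤ R y := by
  set φ : ℝ → ℝ := fun t =>
    H / 2 * t ^ 2 * ‖y - x‖ ^ 2 + R (x + t • (y - x)) - t * ⟪gradient R x, y - x⟫ with hφdef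
  have hline : ∀ t : ℝ, HasDerivAt (fun s : ℝ => x + s • (y - x)) (y - x) t := by
    intro t
    simpa using ((hasDerivAt_id t).smul_const (y - x)).const_add x
  have hcomp : ∀ t : ℝ,
      HasDerivAt (fun s : ℝ => R (x + s • (y - x)))
        ⟪gradient R (x + t • (y - x)), y - x⟫ t := by
    intro t
    have hfd : HasFDerivAt R
        (InnerProductSpace.toDual ℝ E (gradient R (x + t • (y - x)))) (x + t • (y - x)) :=
      hasGradientAt_iff_hasFDerivAt.mp (hR (x + t • (y - x))).hasGradientAt
    have hc := hfd.comp_hasDerivAt t (hline t)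
    simp only [InnerProductSpace.toDual_apply_apply] at hc
    exact hc
  have hφ : ∀ t : ℝ, HasDerivAt φ
      (H * t * ‖y - x‖ ^ 2 + ⟪gradient R (x + t • (y - x)), y - x⟫
        - ⟪gradient R x, y - x⟫) t := by
    intro t
    have h1 : HasDerivAt (fun s : ℝ => H / 2 * s ^ 2 * ‖y - x‖ ^ 2)
        (H * t * ‖y - x‖ ^ 2) t := by
      have := ((hasDerivAt_pow 2 t).const_mul (H / 2)).mul_const (‖y - x‖ ^ 2)
      refine this.congr_deriv ?_
      simp
      left
      ring
    have h3 : HasDerivAt (fun s : ℝ => s * ⟪gradient R x, y - x⟫)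
        ⟪gradient R x, y - x⟫ t := by
      simpa using (hasDerivAt_id t).mul_const ⟪gradient R x, y - x⟫
    exact (h1.add (hcomp t)).sub h3
  have hderiv_nonneg : ∀ t ∈ interior (Set.Icc (0:ℝ) 1), 0 ≤ deriv φ t := by
    intro t ht
    rw [interior_Icc] at ht
    rw [(hφ t).deriv]
    have hCS : ⟪gradient R x - gradient R (x + t • (y - x)), y - x⟫
        ≤ ‖gradient R x - gradient R (x + t • (y - x))‖ * ‖y - x‖ :=
      real_inner_le_norm _ _
    have hlip : ‖gradient R x - gradient R (x + t • (y - x))‖ ≤ H * (t * ‖y - x‖) := by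
      have := hLip.dist_le_mul x (x + t • (y - x))
      rw [dist_eq_norm, dist_eq_norm] at this
      have hx : ‖x - (x + t • (y - x))‖ = t * ‖y - x‖ := by
        rw [show x - (x + t • (y - x)) = -(t • (y - x)) by abel, norm_neg, norm_smul,
          Real.norm_eq_abs, abs_of_nonneg ht.1.le]
      rwa [hx, Real.coe_toNNReal H hH] at this
    have hinner : ⟪gradient R x - gradient R (x + t • (y - x)), y - x⟫
        ≤ H * t * ‖y - x‖ ^ 2 := by
      calc ⟪gradient R x - gradient R (x + t • (y - x)), y - x⟫
          ≤ ‖gradient R x - gradient R (x + t • (y - x))‖ * ‖y - x‖ := hCS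
        _ ≤ (H * (t * ‖y - x‖)) * ‖y - x‖ :=
            mul_le_mul_of_nonneg_right hlip (norm_nonneg _)
        _ = H * t * ‖y - x‖ ^ 2 := by ring
    rw [inner_sub_left] at hinner
    linarith
  have hmono : MonotoneOn φ (Set.Icc (0:ℝ) 1) := by
    apply monotoneOn_of_deriv_nonneg (convex_Icc 0 1)
    · exact Continuous.continuousOn (by
        have : ∀ t, DifferentiableAt ℝ φ t := fun t => (hφ t).differentiableAt
        exact (Differentiable.continuous this))
    · exact fun t _ => ((hφ t).differentiableAt).differentiableWithinAt
    · exact hderiv_nonneg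
  have h01 : φ 0 ≤ φ 1 := hmono (Set.left_mem_Icc.mpr zero_le_one)
    (Set.right_mem_Icc.mpr zero_le_one) zero_le_one
  simp only [hφdef] at h01
  norm_num at h01
  have hgx : ⟪gradient R x, y - x⟫ = (fderiv ℝ R x) y - (fderiv ℝ R x) x := by simp
  linarith

/-- Lemma 4 of the paper: descent of the augmented Lagrangian across the final-layer
primal update combined with the dual update. -/
theorem augmented_lagrangian_final_layer_descent
    {E : Type*} [NormedAddCommGroup E] [InnerProductSpace ℝ E] [CompleteSpace E]
    (R : E → ℝ) (hR : Differentiable ℝ R)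
    (H : ℝ) (hH : 0 ≤ H)
    (hLip : LipschitzWith (Real.toNNReal H) (gradient R))
    (ρ : ℝ) (hρ : 0 < ρ)
    (c z₀ zbar z' u u' : E)
    (hu : gradient R z₀ + u = 0)
    (hu' : gradient R z' + u' = 0)
    (hdual : u' = u + ρ • (z' - c))
    (L : E → E → ℝ)
    (hL : ∀ w v : E, L w v = R w + ⟪v, w - c⟫ + (ρ / 2) * ‖w - c‖ ^ 2) :
    L zbar u - L z' u' ≥
      (ρ / 2 - H / 2 - 2 * H ^ 2 / ρ) * ‖z' - zbar‖ ^ 2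
        - (2 * H ^ 2 / ρ) * ‖zbar - z₀‖ ^ 2 := by
  set d1 := ‖z' - zbar‖ with hd1
  set d0 := ‖zbar - z₀‖ with hd0
  -- descent lemma at x = z', y = zbar
  have hdesc : R z' + ⟪gradient R z', zbar - z'⟫ - H / 2 * ‖zbar - z'‖ ^ 2 ≤ R zbar :=
    descent_lemma_aux R hR H hH hLip z' zbar
  have hrev : ‖zbar - z'‖ = d1 := by rw [hd1, norm_sub_rev]
  rw [hrev] at hdesc
  -- quadratic identity
  have hquad : ⟪u, zbar - c⟫ + ρ / 2 * ‖zbar - c‖ ^ 2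
      = ⟪u, z' - c⟫ + ρ / 2 * ‖z' - c‖ ^ 2
        + ⟪u + ρ • (z' - c), zbar - z'⟫ + ρ / 2 * ‖zbar - z'‖ ^ 2 := by
    have e1 : zbar - z' = (zbar - c) - (z' - c) := by abel
    rw [e1]
    simp only [← real_inner_self_eq_norm_sq, inner_sub_left, inner_sub_right, inner_add_left,
      real_inner_smul_left]
    rw [real_inner_comm zbar z', real_inner_comm zbar c, real_inner_comm z' c]
    ring
  -- gradient stationarity: ⟪gradient R z' + u + ρ • (z' - c), zbar - z'⟫ = 0
  have hstat : gradient R z' + (u + ρ • (z' - c)) = 0 := by rw [← hdual]; exact hu'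
  have hgz' : gradient R z' = -(u + ρ • (z' - c)) := by
    have := hstat; linear_combination (norm := module) this
  have hinnerzero : ⟪gradient R z', zbar - z'⟫ + ⟪u + ρ • (z' - c), zbar - z'⟫ = 0 := by
    rw [hgz', inner_neg_left]; ring
  -- first part: L zbar u - L z' u ≥ (ρ/2 - H/2) d1²
  have hpart1 : L zbar u - L z' u ≥ (ρ / 2 - H / 2) * d1 ^ 2 := by
    rw [hL, hL]
    have hq := hquad
    rw [hrev] at hq
    nlinarith [hdesc, hq, hinnerzero]
  -- second part: L z' u - L z' u' = -ρ ‖z' - c‖²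
  have hpart2 : L z' u - L z' u' = - (ρ * ‖z' - c‖ ^ 2) := by
    rw [hL, hL, hdual]
    simp only [inner_add_left, real_inner_smul_left, real_inner_self_eq_norm_sq]
    ring
  -- bound ρ ‖z' - c‖² ≤ 2H²/ρ (d1² + d0²)
  have hρc : ρ • (z' - c) = gradient R z₀ - gradient R z' := by
    have h1 : u = -gradient R z₀ := by linear_combination (norm := module) hu
    have h2 : u' = -gradient R z' := by linear_combination (norm := module) hu'
    have := hdual
    rw [h1, h2] at this
    linear_combination (norm := module) - this
  have hnorm : ρ * ‖z' - c‖ = ‖gradient R z₀ - gradient R z'‖ := by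
    rw [← hρc, norm_smul, Real.norm_eq_abs, abs_of_pos hρ]
  have hgradlip : ‖gradient R z₀ - gradient R z'‖ ≤ H * (d1 + d0) := by
    have := hLip.dist_le_mul z₀ z'
    rw [dist_eq_norm, dist_eq_norm, Real.coe_toNNReal H hH] at this
    have htri : ‖z₀ - z'‖ ≤ d1 + d0 := by
      calc ‖z₀ - z'‖ = ‖(zbar - z') + (z₀ - zbar)‖ := by congr 1; abel
        _ ≤ ‖zbar - z'‖ + ‖z₀ - zbar‖ := norm_add_le _ _
        _ = d1 + d0 := by rw [hrev, hd0, norm_sub_rev]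
    calc ‖gradient R z₀ - gradient R z'‖ ≤ H * ‖z₀ - z'‖ := this
      _ ≤ H * (d1 + d0) := mul_le_mul_of_nonneg_left htri hH
  have hbound : ρ * ‖z' - c‖ ^ 2 ≤ 2 * H ^ 2 / ρ * (d1 ^ 2 + d0 ^ 2) := by
    have h1 : (ρ * ‖z' - c‖) ^ 2 ≤ (H * (d1 + d0)) ^ 2 := by
      apply pow_le_pow_left₀ (mul_nonneg hρ.le (norm_nonneg _))
      rw [hnorm]; exact hgradlip
    have h2 : (H * (d1 + d0)) ^ 2 ≤ 2 * H ^ 2 * (d1 ^ 2 + d0 ^ 2) := by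
      nlinarith [sq_nonneg (d1 - d0), sq_nonneg H]
    rw [div_mul_eq_mul_div, le_div_iff₀ hρ]
    have h3 : ρ * ‖z' - c‖ ^ 2 * ρ = (ρ * ‖z' - c‖) ^ 2 := by ring
    rw [h3]
    linarith
  have := hpart1
  have h2 := hpart2
  have key : L zbar u - L z' u' ≥ (ρ / 2 - H / 2) * d1 ^ 2
      - 2 * H ^ 2 / ρ * (d1 ^ 2 + d0 ^ 2) := by linarith
  linarith [key]
end

section
/- Work in EuclideanSpace ℝ (Fin n). Let φ : EuclideanSpace ℝ (Fin n) → ℝ be differentiable at x̄, let Ω : EuclideanSpace ℝ (Fin n) → ℝ be convex, and let θ : Fin n → ℝ with θ_i > 0 for all i. Define P(x) = φ(x̄) + ⟪∇φ(x̄), x − x̄⟫ + (1/2)∑_i θ_i (x_i − x̄_i)². Suppose x' is a global minimizer of x ↦ P(x) + Ω(x), and suppose the backtracking condition φ(x') ≤ P(x') holds. Then (φ(x̄) + Ω(x̄)) − (φ(x') + Ω(x')) ≥ (1/2)∑_i θ_i (x'_i − x̄_i)². -/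
open scoped RealInnerProductSpace

/-- Sufficient descent of one proximal weight-update step: if `x'` minimizes
`P + Ω` where `P` is the θ-weighted quadratic model of `φ` at `x̄`, and the
backtracking condition `φ(x') ≤ P(x')` holds, then `φ + Ω` decreases by at least
half the θ-weighted squared distance moved. -/
theorem weight_update_sufficient_descent
    {n : ℕ}
    (φ : EuclideanSpace ℝ (Fin n) → ℝ)
    (xbar : EuclideanSpace ℝ (Fin n))
    (hφ : DifferentiableAt ℝ φ xbar)
    (Ω : EuclideanSpace ℝ (Fin n) → ℝ) (hΩ : ConvexOn ℝ Set.univ Ω)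
    (θ : Fin n → ℝ) (hθ : ∀ i, 0 < θ i)
    (P : EuclideanSpace ℝ (Fin n) → ℝ)
    (hP : ∀ x : EuclideanSpace ℝ (Fin n),
      P x = φ xbar + ⟪gradient φ xbar, x - xbar⟫ + (1 / 2) * ∑ i, θ i * (x i - xbar i) ^ 2)
    (x' : EuclideanSpace ℝ (Fin n))
    (hmin : ∀ x : EuclideanSpace ℝ (Fin n), P x' + Ω x' ≤ P x + Ω x)
    (hback : φ x' ≤ P x') :
    (φ xbar + Ω xbar) - (φ x' + Ω x') ≥ (1 / 2) * ∑ i, θ i * (x' i - xbar i) ^ 2 := by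
  set g := gradient φ xbar with hg
  set S : ℝ := ⟪g, x' - xbar⟫ with hS
  set Q : ℝ := (1 / 2) * ∑ i, θ i * (x' i - xbar i) ^ 2 with hQ
  have hQ0 : 0 ≤ Q := by
    apply mul_nonneg (by norm_num)
    exact Finset.sum_nonneg fun i _ =>
      mul_nonneg (hθ i).le (sq_nonneg _)
  -- key inequality for each t ∈ (0,1]
  have key : ∀ t : ℝ, 0 < t → t ≤ 1 → S + (2 - t) * Q + Ω x' ≤ Ω xbar := by
    intro t ht0 ht1
    set xt : EuclideanSpace ℝ (Fin n) := x' + t • (xbar - x') with hxt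
    have hxtcomb : xt = (1 - t) • x' + t • xbar := by
      rw [hxt]; module
    have hΩt : Ω xt ≤ (1 - t) * Ω x' + t * Ω xbar := by
      rw [hxtcomb]
      exact hΩ.2 (Set.mem_univ x') (Set.mem_univ xbar) (by linarith) ht0.le (by ring)
    have hsub : xt - xbar = (1 - t) • (x' - xbar) := by
      rw [hxt]; module
    have hinner : ⟪g, xt - xbar⟫ = (1 - t) * S := by
      rw [hsub, real_inner_smul_right]
    have hcoord : ∀ i, xt i - xbar i = (1 - t) * (x' i - xbar i) := by
      intro i
      have h1 : (xt - xbar) i = ((1 - t) • (x' - xbar)) i := by rw [hsub]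
      simpa [PiLp.sub_apply, PiLp.smul_apply, smul_eq_mul] using h1
    have hsum : ∑ i, θ i * (xt i - xbar i) ^ 2
        = (1 - t) ^ 2 * ∑ i, θ i * (x' i - xbar i) ^ 2 := by
      rw [Finset.mul_sum]
      refine Finset.sum_congr rfl fun i _ => ?_
      rw [hcoord i]; ring
    have hPxt : P xt = φ xbar + (1 - t) * S + (1 - t) ^ 2 * Q := by
      rw [hP xt, hinner, hsum, hQ]; ring
    have hPx' : P x' = φ xbar + S + Q := by
      rw [hP x', hS, hQ]
    have h := hmin xt
    rw [hPxt, hPx'] at h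
    -- h : φ xbar + S + Q + Ω x' ≤ φ xbar + (1-t)*S + (1-t)^2*Q + Ω xt
    have h2 : t * S + (2 * t - t ^ 2) * Q + t * Ω x' ≤ t * Ω xbar := by nlinarith
    have h3 := (mul_le_mul_iff_right₀ ht0).mp (by linarith [h2] : t * (S + (2 - t) * Q + Ω x') ≤ t * Ω xbar)
    linarith
  have key0 : S + 2 * Q + Ω x' ≤ Ω xbar := by
    by_contra hcon
    push_neg at hcon
    set ε := S + 2 * Q + Ω x' - Ω xbar with hε
    have hε0 : 0 < ε := by linarith
    set t := min 1 (ε / (Q + 1)) with htdef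
    have ht0 : 0 < t := lt_min one_pos (div_pos hε0 (by linarith))
    have hk := key t ht0 (min_le_left _ _)
    have htQ : t * Q < ε := by
      calc t * Q ≤ (ε / (Q + 1)) * Q :=
            mul_le_mul_of_nonneg_right (min_le_right _ _) hQ0
        _ < ε := by
            rw [div_mul_eq_mul_div, div_lt_iff₀ (by linarith)]
            nlinarith
    nlinarith [hk, htQ]
  have hPx' : P x' = φ xbar + S + Q := by rw [hP x', hS, hQ]
  have : φ x' ≤ φ xbar + S + Q := hPx' ▸ hback
  linarith
end

section
/- Let c, a ∈ ℝ and define g : ℝ → ℝ by g(z) = (z − c)² + (max z 0 − a)². Then g attains its infimum on ℝ, and every global minimizer z* of g satisfies z* = min c 0 or z* = max ((c + a)/2) 0. -/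
/-!
On `z ≤ 0` the objective is `(z - c)² + a²`, on `z ≥ 0` it is `2 (z - (c + a)/2)² + (c - a)²/2`.
Each piece is minimized on its half-line by the projection of its vertex, `min c 0` resp.
`max ((c + a)/2) 0`, and grows at least quadratically away from it. So the better of the two
projections is a global minimizer, and any global minimizer, lying in one of the half-lines,
must be that half-line's projection.
-/

open Set

section PiecewiseMinimum

variable {α β : Type*} [LinearOrder β] {f : α → β} {s t : Set α} {x y : α}

theorem exists_forall_le_of_isMinOn_of_union_eq_univ (hst : s ∪ t = univ)
    (hx : IsMinOn f s x) (hy : IsMinOn f t y) : ∃ z, ∀ w, f z ≤ f w := by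
  have hmem : ∀ w, w ∈ s ∪ t := fun w => hst ▸ mem_univ w
  rcases le_total (f x) (f y) with hxy | hyx
  · exact ⟨x, fun w => (hmem w).elim (fun hw => hx hw) fun hw => hxy.trans (hy hw)⟩
  · exact ⟨y, fun w => (hmem w).elim (fun hw => hyx.trans (hx hw)) fun hw => hy hw⟩

theorem eq_or_eq_of_forall_le_of_union_eq_univ {z : α} (hst : s ∪ t = univ)
    (hx : ∀ w ∈ s, f w ≤ f x → w = x) (hy : ∀ w ∈ t, f w ≤ f y → w = y)
    (hz : ∀ w, f z ≤ f w) : z = x ∨ z = y := by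
  rcases (hst ▸ mem_univ z : z ∈ s ∪ t) with hzs | hzt
  · exact Or.inl (hx z hzs (hz x))
  · exact Or.inr (hy z hzt (hz y))

end PiecewiseMinimum

section QuadraticGrowth

variable {α : Type*} [MetricSpace α] {f : α → ℝ} {s : Set α} {x : α}

theorem isMinOn_of_add_dist_sq_le (h : ∀ z ∈ s, f x + dist z x ^ 2 ≤ f z) :
    IsMinOn f s x :=
  isMinOn_iff.2 fun z hz => by nlinarith [h z hz, sq_nonneg (dist z x)]

theorem eq_of_add_dist_sq_le (h : ∀ z ∈ s, f x + dist z x ^ 2 ≤ f z) {z : α} (hz : z ∈ s)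
    (hle : f z ≤ f x) : z = x := by
  have hsq : dist z x ^ 2 = 0 := le_antisymm (by linarith [h z hz]) (sq_nonneg _)
  exact dist_eq_zero.1 (pow_eq_zero_iff two_ne_zero |>.1 hsq)

end QuadraticGrowth

section HalfLineProjection

theorem min_zero_sub_sq_add_sub_sq_le (p : ℝ) {z : ℝ} (hz : z ≤ 0) :
    (min p 0 - p) ^ 2 + (z - min p 0) ^ 2 ≤ (z - p) ^ 2 := by
  rcases le_total p 0 with hp | hp
  · simp [min_eq_left hp]
  · rw [min_eq_right hp]
    nlinarith

theorem max_zero_sub_sq_add_sub_sq_le (p : ℝ) {z : ℝ} (hz : 0 ≤ z) :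
    (max p 0 - p) ^ 2 + (z - max p 0) ^ 2 ≤ (z - p) ^ 2 := by
  rcases le_total p 0 with hp | hp
  · rw [max_eq_right hp]
    nlinarith
  · simp [max_eq_left hp]

end HalfLineProjection

/-- Closed-form solution of the ReLU `z`-update subproblem: the function
`g(z) = (z − c)² + (max z 0 − a)²` attains its infimum, and every global minimizer
equals `min c 0` or `max ((c + a)/2) 0`. -/
theorem relu_z_update_closed_form
    (c a : ℝ) (g : ℝ → ℝ)
    (hg : ∀ z : ℝ, g z = (z - c) ^ 2 + (max z 0 - a) ^ 2) :
    (∃ zstar : ℝ, ∀ z : ℝ, g zstar ≤ g z) ∧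
      (∀ zstar : ℝ, (∀ z : ℝ, g zstar ≤ g z) →
        zstar = min c 0 ∨ zstar = max ((c + a) / 2) 0) := by
  have hcover : Iic (0 : ℝ) ∪ Ici 0 = univ := Iic_union_Ici
  have hlow : ∀ z ∈ Iic (0 : ℝ), g (min c 0) + dist z (min c 0) ^ 2 ≤ g z := by
    intro z hz
    have hproj := min_zero_sub_sq_add_sub_sq_le c hz
    rw [hg, hg, max_eq_right (mem_Iic.1 hz), max_eq_right (min_le_right c 0), Real.dist_eq,
      sq_abs]
    linarith
  have hhigh : ∀ z ∈ Ici (0 : ℝ),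
      g (max ((c + a) / 2) 0) + dist z (max ((c + a) / 2) 0) ^ 2 ≤ g z := by
    intro z hz
    have hproj := max_zero_sub_sq_add_sub_sq_le ((c + a) / 2) hz
    rw [hg, hg, max_eq_left (mem_Ici.1 hz), max_eq_left (le_max_right _ 0), Real.dist_eq,
      sq_abs]
    nlinarith [sq_nonneg (z - max ((c + a) / 2) 0)]
  exact ⟨exists_forall_le_of_isMinOn_of_union_eq_univ hcover
      (isMinOn_of_add_dist_sq_le hlow) (isMinOn_of_add_dist_sq_le hhigh),
    fun _ hmin => eq_or_eq_of_forall_le_of_union_eq_univ hcover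
      (fun _ => eq_of_add_dist_sq_le hlow) (fun _ => eq_of_add_dist_sq_le hhigh) hmin⟩
end

section
/- Let E be a finite-dimensional real inner product space and let L : E → ℝ be continuously differentiable. Let x : ℕ → E be a bounded sequence and let C > 0, C' ≥ 0. Suppose: (i) L is bounded below on E; (ii) for all k, L(x_k) − L(x_{k+1}) ≥ C‖x_{k+1} − x_k‖²; and (iii) for all k, ‖∇L(x_{k+1})‖ ≤ C'‖x_{k+1} − x_k‖. Then the sequence (x_k) has at least one limit point, and every limit point x* satisfies ∇L(x*) = 0. -/
/-- Abstract global convergence framework for dlADMM: a bounded sequence with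
sufficient descent of a lower-bounded `C¹` function and a gradient bound has a
limit point, and every limit point is a stationary point. -/
theorem descent_method_limit_points_stationary
    {E : Type*} [NormedAddCommGroup E] [InnerProductSpace ℝ E] [FiniteDimensional ℝ E]
    (L : E → ℝ) (hL : ContDiff ℝ 1 L)
    (x : ℕ → E) (hbdd : ∃ M : ℝ, ∀ k : ℕ, ‖x k‖ ≤ M)
    (C C' : ℝ) (hC : 0 < C) (hC' : 0 ≤ C')
    (hlb : ∃ m : ℝ, ∀ y : E, m ≤ L y)
    (hdescent : ∀ k : ℕ, L (x k) - L (x (k + 1)) ≥ C * ‖x (k + 1) - x k‖ ^ 2)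
    (hgrad : ∀ k : ℕ, ‖gradient L (x (k + 1))‖ ≤ C' * ‖x (k + 1) - x k‖) :
    (∃ p : E, MapClusterPt p Filter.atTop x) ∧
      (∀ p : E, MapClusterPt p Filter.atTop x → gradient L p = 0) := by
  obtain ⟨M, hM⟩ := hbdd
  obtain ⟨m, hm⟩ := hlb
  -- the sequence L ∘ x is antitone and bounded below, hence converges
  have hanti : Antitone (fun k => L (x k)) := by
    refine antitone_nat_of_succ_le fun k => ?_
    have h1 := hdescent k
    nlinarith [sq_nonneg ‖x (k + 1) - x k‖]
  have hbddb : BddBelow (Set.range fun k => L (x k)) := ⟨m, fun y ⟨k, hk⟩ => hk ▸ hm (x k)⟩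
  have hconv : Filter.Tendsto (fun k => L (x k)) Filter.atTop
      (nhds (⨅ k, L (x k))) := tendsto_atTop_ciInf hanti hbddb
  have hconv' : Filter.Tendsto (fun k => L (x (k + 1))) Filter.atTop
      (nhds (⨅ k, L (x k))) := by
    exact (Filter.tendsto_add_atTop_iff_nat 1).2 hconv
  have hdiff0 : Filter.Tendsto (fun k => L (x k) - L (x (k + 1))) Filter.atTop (nhds 0) := by
    simpa using hconv.sub hconv'
  -- squeeze: C‖x(k+1)-x k‖² → 0, hence ‖x(k+1)-x k‖ → 0
  have hsq : Filter.Tendsto (fun k => ‖x (k + 1) - x k‖ ^ 2) Filter.atTop (nhds 0) := by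
    have h1 : Filter.Tendsto (fun k => C * ‖x (k + 1) - x k‖ ^ 2) Filter.atTop (nhds 0) := by
      refine squeeze_zero (fun k => by positivity) (fun k => hdescent k) hdiff0
    have := h1.const_mul C⁻¹
    simpa [← mul_assoc, inv_mul_cancel₀ hC.ne'] using this
  have hnorm0 : Filter.Tendsto (fun k => ‖x (k + 1) - x k‖) Filter.atTop (nhds 0) := by
    have := hsq.sqrt
    simpa [Real.sqrt_sq (norm_nonneg _)] using this
  -- hence the gradients along the sequence tend to 0
  have hgrad0 : Filter.Tendsto (fun k => gradient L (x k)) Filter.atTop (nhds 0) := by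
    rw [← Filter.tendsto_add_atTop_iff_nat 1]
    refine squeeze_zero_norm (fun k => hgrad k) ?_
    simpa using hnorm0.const_mul C'
  constructor
  · -- existence of a limit point: the sequence lives in a compact ball
    have hx : ∀ n, x n ∈ Metric.closedBall (0 : E) M := by
      intro n; simpa [Metric.mem_closedBall, dist_eq_norm] using hM n
    obtain ⟨p, -, φ, hφ, hp⟩ :=
      (isCompact_closedBall (0 : E) M).tendsto_subseq hx
    exact ⟨p, (hp.mapClusterPt).of_comp hφ.tendsto_atTop⟩
  · intro p hp
    -- gradient is continuous since L is C¹
    have hcont : Continuous (gradient L) := by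
      have h1 : Continuous (fderiv ℝ L) := hL.continuous_fderiv one_ne_zero
      exact (InnerProductSpace.toDual ℝ E).symm.continuous.comp h1
    have hcp : MapClusterPt (gradient L p) Filter.atTop (gradient L ∘ x) :=
      hp.continuousAt_comp hcont.continuousAt
    -- a cluster point of a sequence converging to 0 must be 0
    have hne : ClusterPt (gradient L p) (nhds (0 : E)) := hcp.clusterPt.mono hgrad0
    exact eq_of_nhds_neBot hne
end
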